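/- For every real number z with 0 ≤ z ≤ 1/8, one has max{ (1/32)/(1/4 − z), (1/16 − z + 4z²)/(1/4 − z) } ≥ 1/(4 + √8); moreover, the left-hand side, viewed as a function of z on [0, 1/8], attains its minimum at z = 1/8 − √(1/128). -/
import Mathlib


/-- The function `z ↦ max{(1/32)/(1/4 − z), (1/16 − z + 4z²)/(1/4 − z)}`. -/
noncomputable def maxRatio (z : ℝ) : ℝ :=
  max ((1 / 32) / (1 / 4 - z)) ((1 / 16 - z + 4 * z ^ 2) / (1 / 4 - z))

lemma sqrt8_eq : Real.sqrt 8 = 2 * Real.sqrt 2 := by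
  rw [show (8:ℝ) = 2^2 * 2 by norm_num, Real.sqrt_mul (by positivity),
    Real.sqrt_sq (by norm_num)]

lemma sqrt128_eq : Real.sqrt (1/128) = Real.sqrt 2 / 16 := by
  rw [show (1/128:ℝ) = (Real.sqrt 2 / 16)^2 by
      rw [div_pow, Real.sq_sqrt (by norm_num : (2:ℝ) ≥ 0)]; norm_num,
    Real.sqrt_sq (by positivity)]

lemma main_ineq (z : ℝ) (hz0 : 0 ≤ z) (hz1 : z ≤ 1/8) :
    1 / (4 + Real.sqrt 8) ≤ maxRatio z := by
  rw [sqrt8_eq]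
  set s := Real.sqrt 2 with hs
  have hs2 : s ^ 2 = 2 := Real.sq_sqrt (by norm_num)
  have hs0 : 0 < s := Real.sqrt_pos.mpr (by norm_num)
  have hsle : s ≤ 3/2 := by nlinarith
  have hd : (0:ℝ) < 1/4 - z := by linarith
  have hc : (0:ℝ) < 4 + 2 * s := by linarith
  rcases le_or_gt z (1/8 - s/16) with h | h
  · refine le_max_of_le_right ?_
    rw [div_le_div_iff₀ hc hd]
    nlinarith [sq_nonneg (z - (1/8 - s/16)), mul_nonneg (sub_nonneg.mpr h)
      (sub_nonneg.mpr (show z ≤ (2+s)/16 + s/8 from by nlinarith)), sq_nonneg s]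
  · refine le_max_of_le_left ?_
    rw [div_le_div_iff₀ hc hd]
    nlinarith

/-- For every real `z` with `0 ≤ z ≤ 1/8`, one has
`max{(1/32)/(1/4 − z), (1/16 − z + 4z²)/(1/4 − z)} ≥ 1/(4 + √8)`; moreover this function
of `z` attains its minimum on `[0, 1/8]` at `z = 1/8 − √(1/128)`. -/
theorem maxRatio_lower_bound_and_min :
    (∀ z : ℝ, 0 ≤ z → z ≤ 1 / 8 → 1 / (4 + Real.sqrt 8) ≤ maxRatio z) ∧
    (1 / 8 - Real.sqrt (1 / 128) ∈ Set.Icc (0 : ℝ) (1 / 8) ∧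
      ∀ z ∈ Set.Icc (0 : ℝ) (1 / 8),
        maxRatio (1 / 8 - Real.sqrt (1 / 128)) ≤ maxRatio z) := by
  have hs2 : Real.sqrt 2 ^ 2 = 2 := Real.sq_sqrt (by norm_num)
  have hs0 : 0 < Real.sqrt 2 := Real.sqrt_pos.mpr (by norm_num)
  have hsle : Real.sqrt 2 ≤ 3/2 := by nlinarith
  set s := Real.sqrt 2 with hs
  have hval : maxRatio (1 / 8 - Real.sqrt (1/128)) = 1 / (4 + Real.sqrt 8) := by
    rw [sqrt8_eq, sqrt128_eq, maxRatio]
    have h1 : (1/16 - (1/8 - s/16) + 4 * (1/8 - s/16)^2) = 1/32 := by nlinarith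
    rw [h1, max_self]
    rw [div_eq_div_iff (by linarith) (by linarith)]
    ring
  refine ⟨main_ineq, ⟨?_, ?_⟩, ?_⟩
  · rw [sqrt128_eq]; nlinarith
  · rw [sqrt128_eq]; nlinarith
  · intro z hz
    rw [hval]
    exact main_ineq z hz.1 hz.2
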